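/- In the identity-design split model with y = β* + ε, E[ε_i] = 0 and Var(ε_i) = σ² independently across coordinates, the expected squared estimation error of the dense split estimator (with exact support recovery S) is E‖β − β*‖² = |S|·σ² + (1/(1+ν))²‖β*_{Sᶜ}‖² + (ν/(1+ν))²·|Sᶜ|·σ². As ν → ∞ this tends to p·σ², the MLE risk. -/

import Mathlib

/-!
Coordinatewise, the split estimator is a linear shrinkage `c * (β* + ε)` with `c = 1` on `S` and
`c = ν / (1 + ν)` off `S`. Since `ε` is centred, the cross term of
`(c * (β* + ε) - β*)² = (c - 1)² β*² + 2 c (c - 1) β* ε + c² ε²` has mean zero, so each coordinate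
contributes squared bias `(1 - c)² β*²` plus variance `c² σ²`. As `ν → ∞` the shrinkage factor
tends to `1`, killing the bias and restoring the full variance `σ²` on `Sᶜ`.
-/

open MeasureTheory Filter

section LinearShrinkage

variable {Ω : Type*} [MeasurableSpace Ω] {μ : Measure Ω}

lemma sq_mul_add_sub_eq (c b x : ℝ) :
    (c * (b + x) - b) ^ 2 = (c ^ 2 * x ^ 2 + 2 * c * (c - 1) * b * x) + (1 - c) ^ 2 * b ^ 2 := by
  ring

lemma integrable_sq_mul_add_sub [IsFiniteMeasure μ] {X : Ω → ℝ} (hX : Integrable X μ)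
    (hX2 : Integrable (fun ω => X ω ^ 2) μ) (c b : ℝ) :
    Integrable (fun ω => (c * (b + X ω) - b) ^ 2) μ := by
  simp only [sq_mul_add_sub_eq]
  exact ((hX2.const_mul _).add (hX.const_mul _)).add (integrable_const _)

lemma integral_sq_mul_add_sub [IsProbabilityMeasure μ] {X : Ω → ℝ} (hX : Integrable X μ)
    (hX2 : Integrable (fun ω => X ω ^ 2) μ) (hmean : ∫ ω, X ω ∂μ = 0) (c b : ℝ) :
    ∫ ω, (c * (b + X ω) - b) ^ 2 ∂μ = (1 - c) ^ 2 * b ^ 2 + c ^ 2 * ∫ ω, X ω ^ 2 ∂μ := by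
  have hquad := hX2.const_mul (c ^ 2)
  have hlin := hX.const_mul (2 * c * (c - 1) * b)
  have hcentred : Integrable (fun ω => c ^ 2 * X ω ^ 2 + 2 * c * (c - 1) * b * X ω) μ :=
    hquad.add hlin
  simp only [sq_mul_add_sub_eq]
  rw [integral_add hcentred (integrable_const _), integral_add hquad hlin,
    integral_const_mul, integral_const_mul, hmean, integral_const, probReal_univ, one_smul]
  ring

lemma integral_sum_sq_mul_add_sub [IsProbabilityMeasure μ] {ι : Type*} [Fintype ι]
    (β c : ι → ℝ) (ε : Ω → ι → ℝ) (hint : ∀ i, Integrable (fun ω => ε ω i) μ)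
    (hsqInt : ∀ i, Integrable (fun ω => ε ω i ^ 2) μ) (hmean : ∀ i, ∫ ω, ε ω i ∂μ = 0) :
    ∫ ω, ∑ i, (c i * (β i + ε ω i) - β i) ^ 2 ∂μ
      = ∑ i, ((1 - c i) ^ 2 * β i ^ 2 + c i ^ 2 * ∫ ω, ε ω i ^ 2 ∂μ) := by
  rw [integral_finsetSum _ fun i _ => integrable_sq_mul_add_sub (hint i) (hsqInt i) (c i) (β i)]
  exact Finset.sum_congr rfl fun i _ =>
    integral_sq_mul_add_sub (hint i) (hsqInt i) (hmean i) (c i) (β i)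

end LinearShrinkage

lemma tendsto_one_div_one_add_atTop : Tendsto (fun x : ℝ => 1 / (1 + x)) atTop (nhds 0) := by
  simpa only [one_div, Function.comp_def, id] using
    tendsto_inv_atTop_zero.comp (tendsto_atTop_add_const_left atTop 1 tendsto_id)

lemma tendsto_div_one_add_atTop : Tendsto (fun x : ℝ => x / (1 + x)) atTop (nhds 1) := by
  have hsub : ∀ᶠ x : ℝ in atTop, 1 - 1 / (1 + x) = x / (1 + x) := by
    filter_upwards [eventually_gt_atTop 0] with x hx
    field_simp
    ring
  simpa using (tendsto_const_nhds.sub tendsto_one_div_one_add_atTop).congr' hsub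

/-- Risk of the split dense estimator with exact support recovery, and its ν → ∞ limit p·σ². -/
theorem split_estimator_risk {Ω : Type*} [MeasureSpace Ω]
    [IsProbabilityMeasure (volume : Measure Ω)]
    (p : ℕ) (S : Finset (Fin p)) (σ2 : ℝ)
    (βstar : Fin p → ℝ) (ε : Ω → Fin p → ℝ)
    (hεint : ∀ i, Integrable (fun ω => ε ω i))
    (hεsqInt : ∀ i, Integrable (fun ω => (ε ω i)^2))
    (hεmean : ∀ i, (∫ ω, ε ω i) = 0)
    (hεvar : ∀ i, (∫ ω, (ε ω i)^2) = σ2) :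
    (∀ ν : ℝ, 0 < ν →
      (∫ ω, ∑ i, ((if i ∈ S then βstar i + ε ω i
          else (ν / (1 + ν)) * (βstar i + ε ω i)) - βstar i)^2)
        = S.card * σ2 + (1 / (1 + ν))^2 * (∑ i ∈ Sᶜ, (βstar i)^2)
          + (ν / (1 + ν))^2 * Sᶜ.card * σ2) ∧
    Tendsto (fun ν : ℝ => (S.card : ℝ) * σ2 + (1 / (1 + ν))^2 * (∑ i ∈ Sᶜ, (βstar i)^2)
          + (ν / (1 + ν))^2 * Sᶜ.card * σ2)
      atTop (nhds ((p : ℝ) * σ2)) := by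
  refine ⟨fun ν hν => ?_, ?_⟩
  · have hshrink : 1 - ν / (1 + ν) = 1 / (1 + ν) := by field_simp; ring
    have hsplit : ∀ ω i, (if i ∈ S then βstar i + ε ω i else ν / (1 + ν) * (βstar i + ε ω i))
        = (if i ∈ S then 1 else ν / (1 + ν)) * (βstar i + ε ω i) := by
      intro ω i; split_ifs <;> ring
    simp_rw [hsplit]
    rw [integral_sum_sq_mul_add_sub βstar _ ε hεint hεsqInt hεmean, ← S.sum_add_sum_compl,
      Finset.sum_congr (rfl : S = S) (g := fun _ => σ2) fun i hi => by simp [hi, hεvar],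
      Finset.sum_congr (rfl : Sᶜ = Sᶜ)
        (g := fun i => (1 / (1 + ν)) ^ 2 * βstar i ^ 2 + (ν / (1 + ν)) ^ 2 * σ2)
        fun i hi => by simp [Finset.mem_compl.mp hi, hεvar, hshrink],
      Finset.sum_add_distrib, ← Finset.mul_sum]
    simp only [Finset.sum_const, nsmul_eq_mul]
    ring
  · have hcard : (S.card : ℝ) + Sᶜ.card = p := by
      exact_mod_cast S.card_add_card_compl.trans (Fintype.card_fin p)
    have hlim := ((tendsto_const_nhds (x := (S.card : ℝ) * σ2)).add
      ((tendsto_one_div_one_add_atTop.pow 2).mul_const (∑ i ∈ Sᶜ, βstar i ^ 2))).add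
      (((tendsto_div_one_add_atTop.pow 2).mul_const (Sᶜ.card : ℝ)).mul_const σ2)
    convert hlim using 2
    rw [← hcard]
    ring
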